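/- Let G be a purely non-abelian finite p-group and h : G → Ω_1(Z(G)) a non-trivial homomorphism. Then the map σ(x) = x·h(x) is an automorphism of G of order exactly p. -/

import Mathlib

/-!
Since `h` takes central values, `σ x = x * h x` is an endomorphism, and once `h ∘ h = 1` we get
`σ^[n] x = x * h x ^ n`; hence `σ^[p] = id`, which also makes `σ` bijective.

For `h ∘ h = 1`, suppose `z = h x` has `h z ≠ 1`. The range of `h` is elementary abelian, so a
linear functional `ψ` on it over `ZMod p` separates `h z` from `1`. Then `φ = ψ ∘ h` maps `G` onto
a group of order `p` and `φ z` generates it, so `G` is the internal direct product of `ker φ` and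
the central subgroup `⟨z⟩ ≠ 1`, which a purely non-abelian group does not have.
-/

open Subgroup

def Group.HasNontrivialAbelianDirectFactor (G : Type*) [Group G] : Prop :=
  ∃ A B : Subgroup G, A.Normal ∧ B.Normal ∧ Disjoint A B ∧ A ⊔ B = ⊤ ∧ A ≠ ⊥ ∧
    ∀ a b : G, a ∈ A → b ∈ A → a * b = b * a

theorem Function.bijective_of_iterate_eq_id {α : Type*} {f : α → α} {n : ℕ} (hn : 0 < n)
    (hf : f^[n] = id) : Function.Bijective f :=
  ⟨.of_comp (f := f^[n.pred]) (by rw [iterate_pred_comp_of_pos f hn, hf]; exact injective_id),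
    .of_comp (g := f^[n.pred]) (by rw [comp_iterate_pred_of_pos f hn, hf]; exact surjective_id)⟩

theorem CommGroup.exists_monoidHom_zmod_ne_one {p : ℕ} [Fact p.Prime] {A : Type*} [CommGroup A]
    (hA : ∀ a : A, a ^ p = 1) {a : A} (ha : a ≠ 1) :
    ∃ ψ : A →* Multiplicative (ZMod p), ψ a ≠ 1 := by
  let _ : Module (ZMod p) (Additive A) := AddCommGroup.zmodModule (n := p) fun x => hA x.toMul
  obtain ⟨f, hf⟩ := Module.Projective.exists_dual_ne_zero (V := Additive A) (ZMod p)
    (x := .ofMul a) ha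
  exact ⟨AddMonoidHom.toMultiplicativeRight f.toAddMonoidHom, hf⟩

section DirectFactor

variable {p : ℕ} [Fact p.Prime] {G H : Type*} [Group G] [Group H] {z : G} {φ : G →* H}

theorem Subgroup.disjoint_zpowers_ker (hzp : z ^ p = 1) (hφ : φ z ≠ 1) :
    Disjoint (zpowers z) φ.ker := by
  rw [disjoint_def]
  rintro _ hn hker
  obtain ⟨n, rfl⟩ := mem_zpowers_iff.mp hn
  have hφp : orderOf (φ z) = p := orderOf_eq_prime (by rw [← map_pow, hzp, map_one]) hφ
  have hpn : (p : ℤ) ∣ n := hφp ▸ orderOf_dvd_iff_zpow_eq_one.mpr (by rwa [← map_zpow])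
  exact orderOf_dvd_iff_zpow_eq_one.mp
    ((Int.natCast_dvd_natCast.mpr (orderOf_dvd_of_pow_eq_one hzp)).trans hpn)

theorem Subgroup.zpowers_sup_ker_eq_top (hH : Nat.card H = p) (hφ : φ z ≠ 1) :
    zpowers z ⊔ φ.ker = ⊤ := by
  refine eq_top_iff.mpr fun g _ => ?_
  obtain ⟨k, hk⟩ := mem_zpowers_iff.mp (mem_zpowers_of_prime_card hH hφ (g' := φ g))
  have hker : (z ^ k)⁻¹ * g ∈ φ.ker := by simp [hk]
  simpa using mul_mem_sup (zpow_mem_zpowers z k) hker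

theorem Group.hasNontrivialAbelianDirectFactor_of_map_ne_one (hH : Nat.card H = p)
    (hz : z ∈ center G) (hzp : z ^ p = 1) (hφ : φ z ≠ 1) :
    Group.HasNontrivialAbelianDirectFactor G := by
  have hcentral : zpowers z ≤ center G := zpowers_le.mpr hz
  refine ⟨zpowers z, φ.ker, ⟨fun a ha g => ?_⟩, inferInstance, disjoint_zpowers_ker hzp hφ,
    zpowers_sup_ker_eq_top hH hφ, ?_, fun a b ha _ => (mem_center_iff.mp (hcentral ha) b).symm⟩
  · rwa [mem_center_iff.mp (hcentral ha) g, mul_inv_cancel_right]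
  · exact zpowers_ne_bot.mpr fun hz1 => hφ (by rw [hz1, map_one])

end DirectFactor

theorem Group.hasNontrivialAbelianDirectFactor_of_map_ne_one_of_exponent {p : ℕ} [Fact p.Prime]
    {G A : Type*} [Group G] [CommGroup A] (hA : ∀ a : A, a ^ p = 1) (f : G →* A) {z : G}
    (hz : z ∈ center G) (hzp : z ^ p = 1) (hfz : f z ≠ 1) :
    Group.HasNontrivialAbelianDirectFactor G := by
  obtain ⟨ψ, hψ⟩ := CommGroup.exists_monoidHom_zmod_ne_one hA hfz
  exact hasNontrivialAbelianDirectFactor_of_map_ne_one (φ := ψ.comp f)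
    ((Nat.card_congr Multiplicative.toAdd).trans (Nat.card_zmod p)) hz hzp hψ

namespace MonoidHom

variable {G : Type*} [Group G] (h : G →* G)

open scoped IsMulCommutative in
theorem map_map_eq_one_of_map_mem_center {p : ℕ} [Fact p.Prime]
    (hG : ¬ Group.HasNontrivialAbelianDirectFactor G)
    (hmem : ∀ x : G, h x ∈ center G ∧ h x ^ p = 1) (x : G) : h (h x) = 1 := by
  by_contra hhx
  have : IsMulCommutative h.range := le_centralizer_iff_isMulCommutative.mp
    fun _ ⟨y, hy⟩ b _ => hy ▸ mem_center_iff.mp (hmem y).1 b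
  exact hG <| Group.hasNontrivialAbelianDirectFactor_of_map_ne_one_of_exponent
    (fun ⟨_, y, hy⟩ => Subtype.ext (hy ▸ (hmem y).2)) h.rangeRestrict (hmem x).1 (hmem x).2
    fun h1 => hhx (congrArg Subtype.val h1)

theorem mul_map_mul_eq_of_map_mem_center (hc : ∀ x : G, h x ∈ center G) (x y : G) :
    x * y * h (x * y) = x * h x * (y * h y) := by
  rw [map_mul, mul_assoc x y, ← mul_assoc y, mem_center_iff.mp (hc x) y]
  group

theorem iterate_mul_map_apply (hhh : ∀ x : G, h (h x) = 1) (n : ℕ) (x : G) :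
    (fun x : G => x * h x)^[n] x = x * h x ^ n := by
  induction n with
  | zero => simp
  | succ n ih =>
    rw [Function.iterate_succ_apply', ih, map_mul, map_pow, hhh, one_pow, mul_one, pow_succ,
      mul_assoc]

end MonoidHom

theorem purely_nonabelian_auto_order_p_general {p : ℕ} (hp : p.Prime) {G : Type*} [Group G]
    (hpna : ¬ ∃ A B : Subgroup G, A.Normal ∧ B.Normal ∧ Disjoint A B ∧ A ⊔ B = ⊤ ∧
      A ≠ ⊥ ∧ ∀ a b : G, a ∈ A → b ∈ A → a * b = b * a)
    (h : G →* G) (hmem : ∀ x : G, h x ∈ Subgroup.center G ∧ (h x) ^ p = 1)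
    (hnt : ∃ x : G, h x ≠ 1) :
    Function.Bijective (fun x : G => x * h x) ∧
    (∀ x y : G, (x * y) * h (x * y) = (x * h x) * (y * h y)) ∧
    (fun x : G => x * h x)^[p] = id ∧
    (fun x : G => x * h x) ≠ id := by
  have := Fact.mk hp
  have hhh : ∀ x, h (h x) = 1 := h.map_map_eq_one_of_map_mem_center hpna hmem
  have hperiod : (fun x : G => x * h x)^[p] = id := funext fun x => by
    rw [h.iterate_mul_map_apply hhh, (hmem x).2, mul_one, id]
  refine ⟨Function.bijective_of_iterate_eq_id hp.pos hperiod,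
    h.mul_map_mul_eq_of_map_mem_center fun x => (hmem x).1, hperiod, fun hid => ?_⟩
  obtain ⟨x, hx⟩ := hnt
  exact hx (mul_eq_left.mp (congrFun hid x))

/-- Let `G` be a purely non-abelian finite `p`-group and `h : G → Ω₁(Z(G))` a
non-trivial homomorphism.  Then the map `σ(x) = x * h(x)` is an automorphism of `G` of
order exactly `p`. -/
theorem purely_nonabelian_auto_order_p {p : ℕ} (hp : p.Prime) {G : Type*} [Group G]
    [Finite G] (hG : IsPGroup p G)
    (hpna : ¬ ∃ A B : Subgroup G, A.Normal ∧ B.Normal ∧ Disjoint A B ∧ A ⊔ B = ⊤ ∧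
      A ≠ ⊥ ∧ ∀ a b : G, a ∈ A → b ∈ A → a * b = b * a)
    (h : G →* G) (hmem : ∀ x : G, h x ∈ Subgroup.center G ∧ (h x) ^ p = 1)
    (hnt : ∃ x : G, h x ≠ 1) :
    Function.Bijective (fun x : G => x * h x) ∧
    (∀ x y : G, (x * y) * h (x * y) = (x * h x) * (y * h y)) ∧
    (fun x : G => x * h x)^[p] = id ∧
    (fun x : G => x * h x) ≠ id :=
  purely_nonabelian_auto_order_p_general hp hpna h hmem hnt
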